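/- The set {(p, w) ∈ ℝ² : p ≥ N₀·(2^(r/w) − 1)/|h|², w > 0} of power-bandwidth pairs achieving Shannon rate at least r > 0 is a convex subset of ℝ², given N₀ > 0 and |h| > 0. -/

import Mathlib

/-! `w ↦ r / w` is convex on `w > 0` and `t ↦ 2 ^ t` is convex and monotone, so the composite
`w ↦ 2 ^ (r / w)` is convex; the set is the epigraph of a nonnegative multiple of it, with the
two coordinates swapped. -/

open Set

theorem ConvexOn.comp_of_convexOn_univ {𝕜 E β γ : Type*} [Semiring 𝕜] [PartialOrder 𝕜]
    [AddCommMonoid E] [AddCommMonoid β] [PartialOrder β] [AddCommMonoid γ] [PartialOrder γ]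
    [Module 𝕜 E] [Module 𝕜 β] [SMul 𝕜 γ] {s : Set E} {f : E → β} {g : β → γ}
    (hg : ConvexOn 𝕜 univ g) (hg' : Monotone g) (hf : ConvexOn 𝕜 s f) :
    ConvexOn 𝕜 s (g ∘ f) :=
  ⟨hf.1, fun _ hx _ hy _ _ ha hb hab =>
    (hg' (hf.2 hx hy ha hb hab)).trans (hg.2 trivial trivial ha hb hab)⟩

theorem convexOn_rpow_div {b r : ℝ} (hb : 1 ≤ b) (hr : 0 ≤ r) :
    ConvexOn ℝ (Ioi 0) fun w : ℝ => b ^ (r / w) := by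
  have hinv : ConvexOn ℝ (Ioi 0) fun w : ℝ => r • w ^ (-1 : ℤ) := (convexOn_zpow (-1)).smul hr
  simpa [Function.comp_def, div_eq_mul_inv] using
    (convexOn_rpow_left (by linarith)).comp_of_convexOn_univ
      (Real.monotone_rpow_of_base_ge_one hb) hinv

theorem convexOn_mul_rpow_div_sub_one {K b r : ℝ} (hK : 0 ≤ K) (hb : 1 ≤ b) (hr : 0 ≤ r) :
    ConvexOn ℝ (Ioi 0) fun w : ℝ => K * (b ^ (r / w) - 1) := by
  simpa [sub_eq_add_neg] using ((convexOn_rpow_div hb hr).add_const (-1)).smul hK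

theorem stmt6_general (r h N₀ : ℝ) (hr : 0 < r) (hN : 0 < N₀) :
    Convex ℝ {pw : ℝ × ℝ |
      N₀ * ((2 : ℝ) ^ (r / pw.2) - 1) / |h| ^ 2 ≤ pw.1 ∧ 0 < pw.2} := by
  set f : ℝ → ℝ := fun w => N₀ / |h| ^ 2 * ((2 : ℝ) ^ (r / w) - 1)
  have hf : ConvexOn ℝ (Ioi 0) f :=
    convexOn_mul_rpow_div_sub_one (by positivity) one_le_two hr.le
  have hswap : {pw : ℝ × ℝ | N₀ * ((2 : ℝ) ^ (r / pw.2) - 1) / |h| ^ 2 ≤ pw.1 ∧ 0 < pw.2} =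
      Prod.swap ⁻¹' {p : ℝ × ℝ | p.1 ∈ Ioi 0 ∧ f p.1 ≤ p.2} := by
    ext ⟨p, w⟩
    simp [f, div_mul_eq_mul_div, and_comm]
  rw [hswap]
  exact hf.convex_epigraph.linear_preimage (LinearEquiv.prodComm ℝ ℝ ℝ).toLinearMap

/-- The set of power-bandwidth pairs achieving Shannon rate at least `r > 0`
is convex. -/
theorem stmt6 (r h N₀ : ℝ) (hr : 0 < r) (hh : 0 < |h|) (hN : 0 < N₀) :
    Convex ℝ {pw : ℝ × ℝ |
      N₀ * ((2 : ℝ) ^ (r / pw.2) - 1) / |h| ^ 2 ≤ pw.1 ∧ 0 < pw.2} :=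
  stmt6_general r h N₀ hr hN
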